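/- arXiv:0911.4968 — 2 statements merged into one kernel-verified Lean document; each statement's English description precedes it below -/
import Mathlib

section
/- The function a(ω) = (1/8)e^{iω ln 4} + (9/2)e^{iω ln 2} - 22·(3/4)²·e^{iω ln(4/3)} + 7 satisfies |a(ω)| ≥ 3/4 for all real ω. -/
open Complex

/- The coefficient 99/8 of the third exponential exceeds the sum 1/8 + 9/2 + 7 = 93/8 of the other
absolute coefficients by exactly 3/4, and all exponentials are unimodular, so the reverse triangle
inequality suffices. -/

lemma norm_exp_I_mul_ofReal_mul_ofReal (ω r : ℝ) : ‖exp (I * ω * r)‖ = 1 := by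
  rw [show I * ω * r = ((ω * r : ℝ) : ℂ) * I by push_cast; ring]
  exact norm_exp_ofReal_mul_I _

lemma abs_sub_sum_abs_le_norm_of_norm_eq_one {z₁ z₂ z₃ : ℂ} (h₁ : ‖z₁‖ = 1) (h₂ : ‖z₂‖ = 1)
    (h₃ : ‖z₃‖ = 1) (α β γ δ : ℝ) :
    |γ| - (|α| + |β| + |δ|) ≤ ‖α * z₁ + β * z₂ - γ * z₃ + δ‖ := by
  have hrest : ‖α * z₁ + β * z₂ + δ‖ ≤ |α| + |β| + |δ| :=
    calc ‖α * z₁ + β * z₂ + δ‖ ≤ ‖(α : ℂ) * z₁‖ + ‖(β : ℂ) * z₂‖ + ‖(δ : ℂ)‖ :=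
          norm_add₃_le
      _ = |α| + |β| + |δ| := by simp [h₁, h₂]
  have hdom : ‖(γ : ℂ) * z₃‖ = |γ| := by simp [h₃]
  calc |γ| - (|α| + |β| + |δ|) ≤ ‖(γ : ℂ) * z₃‖ - ‖α * z₁ + β * z₂ + δ‖ := by
        rw [hdom]; linarith
    _ ≤ ‖α * z₁ + β * z₂ - γ * z₃ + δ‖ := by
        rw [show (α * z₁ + β * z₂ - γ * z₃ + δ : ℂ) = (α * z₁ + β * z₂ + δ) - γ * z₃ by ring,
          norm_sub_rev]
        exact norm_sub_norm_le _ _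

theorem stmt_0 (a : ℝ → ℂ)
    (ha : ∀ ω : ℝ, a ω = (1/8) * Complex.exp (Complex.I * ω * Real.log 4)
      + (9/2) * Complex.exp (Complex.I * ω * Real.log 2)
      - (99/8) * Complex.exp (Complex.I * ω * Real.log (4/3)) + 7) :
    ∀ ω : ℝ, (3/4 : ℝ) ≤ ‖a ω‖ := by
  intro ω
  have h := abs_sub_sum_abs_le_norm_of_norm_eq_one
    (norm_exp_I_mul_ofReal_mul_ofReal ω (Real.log 4))
    (norm_exp_I_mul_ofReal_mul_ofReal ω (Real.log 2))
    (norm_exp_I_mul_ofReal_mul_ofReal ω (Real.log (4/3))) (1/8) (9/2) (99/8) 7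
  have hcoef : |(99/8 : ℝ)| - (|(1/8 : ℝ)| + |(9/2 : ℝ)| + |(7 : ℝ)|) = 3/4 := by norm_num
  rw [ha ω, ← hcoef]
  convert h using 5 <;> norm_num
end

section
/- For each dyadic scale n ∈ ℤ, averaging the Haar shift kernel over random dyadic shifts produces a convolution: ∫₀¹ ∑_{k∈ℤ} (1/L)·h((x/L) - k - s)·g((y/L) - k - s) ds = (1/L)·(h∗g₁)((x-y)/L), where L = r·2ⁿ and g₁(t) = g(-t). -/
/-!
Substituting `u = k + s` turns the shift average `∫₀¹ ∑ₖ φ(s + k) ds` into `∫_ℝ φ`, since the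
translates `[k, k + 1]` of the unit interval tile the line; here
`φ(u) = (1/L) h(x/L - u) g(y/L - u)`, and the reflection `t = x/L - u` turns `∫_ℝ φ` into the
convolution integral.
-/

open MeasureTheory

theorem MeasureTheory.Integrable.intervalIntegral_tsum_comp_add_int {E : Type*}
    [NormedAddCommGroup E] [NormedSpace ℝ E] {f : ℝ → E} (hf : Integrable f) :
    ∫ s in (0:ℝ)..1, ∑' n : ℤ, f (s + n) = ∫ x, f x := by
  have hsummable : Summable fun n : ℤ => ∫ s in Set.Ioc (0:ℝ) 1, ‖f (s + n)‖ := by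
    simpa only [intervalIntegral.integral_of_le zero_le_one] using
      hf.norm.hasSum_intervalIntegral_comp_add_int.summable
  have hswap := hasSum_integral_of_summable_integral_norm
    (fun n : ℤ => (hf.comp_add_right (n : ℝ)).integrableOn) hsummable
  rw [intervalIntegral.integral_of_le zero_le_one]
  refine hswap.unique ?_
  simpa only [intervalIntegral.integral_of_le zero_le_one] using
    hf.hasSum_intervalIntegral_comp_add_int

theorem stmt_8_general (h g : ℝ → ℝ) (Ch Cg : ℝ)
    (hh : ∀ t, |h t| ≤ Ch) (hg : ∀ t, |g t| ≤ Cg)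
    (hhm : Measurable h) (hgm : Measurable g)
    (hhsupp : ∀ t, t ∉ Set.Icc (0:ℝ) 1 → h t = 0)
    (L : ℝ) (x y : ℝ) :
    (∫ s in (0:ℝ)..1, ∑' k : ℤ, (1/L) * h (x/L - k - s) * g (y/L - k - s))
      = (1/L) * ∫ t : ℝ, h t * g (t - (x - y)/L) := by
  have hhi : Integrable h :=
    (Measure.integrableOn_of_bounded (by simp) hhm.aestronglyMeasurable
      (ae_of_all _ hh)).integrable_of_forall_notMem_eq_zero hhsupp
  set φ : ℝ → ℝ := fun u => (1/L) * h (x/L - u) * g (y/L - u)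
  have hφ : Integrable φ :=
    ((hhi.comp_sub_left (x/L)).const_mul (1/L)).mul_bdd
      (hgm.comp (measurable_const.sub measurable_id)).aestronglyMeasurable
      (ae_of_all _ fun u => hg _)
  calc (∫ s in (0:ℝ)..1, ∑' k : ℤ, (1/L) * h (x/L - k - s) * g (y/L - k - s))
      = ∫ s in (0:ℝ)..1, ∑' k : ℤ, φ (s + k) := by
        simp only [φ, sub_add_eq_sub_sub_swap]
    _ = ∫ u, φ u := hφ.intervalIntegral_tsum_comp_add_int
    _ = (1/L) * ∫ u, h (x/L - u) * g (y/L - u) := by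
        simp only [φ, mul_assoc, integral_const_mul]
    _ = (1/L) * ∫ t : ℝ, h t * g (t - (x - y)/L) := by
        rw [← integral_sub_left_eq_self _ volume (x/L)]
        congr 2 with u
        ring_nf

/-- Averaging over the random shift s produces a convolution:
∫₀¹ ∑ₖ (1/L) h(x/L - k - s) g(y/L - k - s) ds = (1/L)(h∗g₁)((x-y)/L). -/
theorem stmt_8 (h g : ℝ → ℝ) (Ch Cg : ℝ)
    (hh : ∀ t, |h t| ≤ Ch) (hg : ∀ t, |g t| ≤ Cg)
    (hhm : Measurable h) (hgm : Measurable g)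
    (hhsupp : ∀ t, t ∉ Set.Icc (0:ℝ) 1 → h t = 0)
    (hgsupp : ∀ t, t ∉ Set.Icc (0:ℝ) 1 → g t = 0)
    (L : ℝ) (hL : 0 < L) (x y : ℝ) :
    (∫ s in (0:ℝ)..1, ∑' k : ℤ, (1/L) * h (x/L - k - s) * g (y/L - k - s))
      = (1/L) * ∫ t : ℝ, h t * g (t - (x - y)/L) :=
  stmt_8_general h g Ch Cg hh hg hhm hgm hhsupp L x y
end
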